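/- arXiv:hep-th/9408086 — 2 statements merged into one kernel-verified Lean document; each statement's English description precedes it below -/
import Mathlib

section
/- Sequences α = (α_n)_{n≥0} and β = (β_n)_{n≥0} in the field ℚ(a,q) of rational functions in two indeterminates a, q form a Bailey pair relative to a (i.e. β_n = Σ_{r=0}^{n} α_r/((q)_{n−r}·(aq;q)_{n+r}) for all n ≥ 0) if and only if for every n ≥ 0 one has α_n = ((1 − a q^{2n})/(1 − a)) · Σ_{r=0}^{n} ((a;q)_{n+r}·(−1)^{n−r}·q^{binom(n−r,2)}/(q)_{n−r}) · β_r, where binom(m,2) = m(m−1)/2. -/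
/-- The finite q-Pochhammer symbol `(a;q)_n = ∏_{m=0}^{n-1} (1 - a q^m)`. -/
noncomputable def qPoch {K : Type*} [Field K] (a q : K) (n : ℕ) : K :=
  ∏ m ∈ Finset.range n, (1 - a * q ^ m)

/-- `(α, β)` form a Bailey pair relative to `a`:
`β_n = ∑_{r=0}^{n} α_r / ((q;q)_{n-r} (aq;q)_{n+r})`. -/
def IsBaileyPair {K : Type*} [Field K] (a q : K) (α β : ℕ → K) : Prop :=
  ∀ n : ℕ, β n =
    ∑ r ∈ Finset.range (n + 1), α r / (qPoch q q (n - r) * qPoch (a * q) q (n + r))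

/-- The field `ℚ(a,q)` of rational functions in two indeterminates over `ℚ`. -/
abbrev RatFuncAQ : Type := FractionRing (MvPolynomial (Fin 2) ℚ)

/-- The indeterminate `a` in `ℚ(a,q)`. -/
noncomputable def aVar : RatFuncAQ :=
  algebraMap (MvPolynomial (Fin 2) ℚ) RatFuncAQ (MvPolynomial.X 0)

/-- The indeterminate `q` in `ℚ(a,q)`. -/
noncomputable def qVar : RatFuncAQ :=
  algebraMap (MvPolynomial (Fin 2) ℚ) RatFuncAQ (MvPolynomial.X 1)


section Basic
variable {K : Type*} [Field K] (a q : K)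

lemma qPoch_zero : qPoch a q 0 = 1 := by simp [qPoch]

lemma qPoch_succ (n : ℕ) : qPoch a q (n + 1) = qPoch a q n * (1 - a * q ^ n) := by
  simp [qPoch, Finset.prod_range_succ]

lemma qPoch_succ' (n : ℕ) : qPoch a q (n + 1) = (1 - a) * qPoch (a * q) q n := by
  rw [qPoch, Finset.prod_range_succ']
  simp only [pow_zero, mul_one, qPoch]
  rw [mul_comm]
  congr 1
  apply Finset.prod_congr rfl
  intro m _
  ring

lemma qPoch_add (n m : ℕ) :
    qPoch a q (n + m) = qPoch a q n * ∏ i ∈ Finset.range m, (1 - a * q ^ (n + i)) := by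
  rw [qPoch, Finset.prod_range_add]; rfl

lemma qPoch_qq_ne (hq : ∀ m : ℕ, (1 : K) - q ^ (m + 1) ≠ 0) (n : ℕ) : qPoch q q n ≠ 0 := by
  rw [qPoch]
  apply Finset.prod_ne_zero_iff.mpr
  intro m _
  rw [← pow_succ']
  exact hq m

lemma qPoch_a_ne (ha : ∀ m : ℕ, (1 : K) - a * q ^ m ≠ 0) (n : ℕ) : qPoch a q n ≠ 0 :=
  Finset.prod_ne_zero_iff.mpr fun m _ => ha m

lemma qPoch_aq_ne (ha : ∀ m : ℕ, (1 : K) - a * q ^ m ≠ 0) (n : ℕ) : qPoch (a * q) q n ≠ 0 := by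
  rw [qPoch]
  apply Finset.prod_ne_zero_iff.mpr
  intro m _
  have := ha (m + 1)
  rwa [pow_succ', ← mul_assoc] at this

end Basic

noncomputable def qb {K : Type*} [Field K] (q : K) (m k : ℕ) : K :=
  qPoch q q m / (qPoch q q k * qPoch q q (m - k))

section QB
variable {K : Type*} [Field K] {q : K}

lemma qb_zero' (hq : ∀ m : ℕ, (1 : K) - q ^ (m + 1) ≠ 0) (m : ℕ) : qb q m 0 = 1 := by
  simp [qb, qPoch_zero]
  exact qPoch_qq_ne q hq m

lemma qb_self (hq : ∀ m : ℕ, (1 : K) - q ^ (m + 1) ≠ 0) (m : ℕ) : qb q m m = 1 := by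
  simp [qb, qPoch_zero]
  exact qPoch_qq_ne q hq m

lemma qb_pascal (hq : ∀ m : ℕ, (1 : K) - q ^ (m + 1) ≠ 0) {m j : ℕ} (hj : j + 1 ≤ m) :
    qb q (m + 1) (j + 1) = q ^ (j + 1) * qb q m (j + 1) + qb q m j := by
  obtain ⟨i, rfl⟩ : ∃ i, m = j + 1 + i := ⟨m - (j + 1), by omega⟩
  have e1 : j + 1 + i + 1 - (j + 1) = i + 1 := by omega
  have e2 : j + 1 + i - (j + 1) = i := by omega
  have e3 : j + 1 + i - j = i + 1 := by omega
  rw [qb, qb, qb, e1, e2, e3]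
  have r1 : qPoch q q (j + 1 + i + 1) = qPoch q q (j + 1 + i) * (1 - q ^ (j + 1 + i + 1)) := by
    rw [qPoch_succ, ← pow_succ']
  have r2 : qPoch q q (j + 1 + i) = qPoch q q (j + i) * (1 - q ^ (j + i + 1)) := by
    have : j + 1 + i = (j + i) + 1 := by omega
    rw [this, qPoch_succ, ← pow_succ']
  have r3 : qPoch q q (j + 1) = qPoch q q j * (1 - q ^ (j + 1)) := by
    rw [qPoch_succ, ← pow_succ']
  have r4 : qPoch q q (i + 1) = qPoch q q i * (1 - q ^ (i + 1)) := by
    rw [qPoch_succ, ← pow_succ']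
  have hq1 := qPoch_qq_ne q hq j
  have hq2 := qPoch_qq_ne q hq i
  have hq3 := hq j
  have hq4 := hq i
  have hq5 := hq (j + i)
  rw [r1, r2, r3, r4]
  field_simp
  ring_nf

end QB

section QBT
variable {K : Type*} [Field K] {q : K}

lemma choose_two_succ (j : ℕ) : (j + 1).choose 2 = j.choose 2 + j := by
  rw [Nat.choose_succ_succ]
  simp [Nat.choose_one_right, Nat.add_comm]

theorem qbinom_sum (hq : ∀ m : ℕ, (1 : K) - q ^ (m + 1) ≠ 0) (m : ℕ) (t : K) :
    ∑ k ∈ Finset.range (m + 1), (-1 : K) ^ k * q ^ k.choose 2 * qb q m k * t ^ k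
      = qPoch t q m := by
  induction m generalizing t with
  | zero => simp [qPoch_zero, qb_zero' hq]
  | succ m ih =>
    rw [qPoch_succ', ← ih (t * q), sub_mul, one_mul, Finset.mul_sum]
    set g : ℕ → K := fun k => (-1 : K) ^ k * q ^ k.choose 2 * qb q m k * (t * q) ^ k with hg
    have hA : ∑ k ∈ Finset.range (m + 1), g k
        = ∑ k ∈ Finset.range (m + 2), (if k ≤ m then g k else 0) := by
      symm
      rw [Finset.sum_range_succ, if_neg (by omega), add_zero]
      exact Finset.sum_congr rfl fun k hk => by
        rw [if_pos (Nat.lt_succ_iff.mp (Finset.mem_range.mp hk))]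
    have hB : ∑ k ∈ Finset.range (m + 1), t * g k
        = ∑ k ∈ Finset.range (m + 2), (if 1 ≤ k then t * g (k - 1) else 0) := by
      symm
      rw [Finset.sum_range_succ', if_neg (by omega), add_zero]
      exact Finset.sum_congr rfl fun k _ => by simp
    rw [hA, hB, ← Finset.sum_sub_distrib]
    apply Finset.sum_congr rfl
    intro k hk
    have hk2 : k ≤ m + 1 := Nat.lt_succ_iff.mp (Finset.mem_range.mp hk)
    rcases Nat.eq_zero_or_pos k with rfl | hkpos
    · simp [g, qb_zero' hq]
    obtain ⟨j, rfl⟩ : ∃ j, k = j + 1 := ⟨k - 1, by omega⟩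
    simp only [if_pos (by omega : 1 ≤ j + 1), Nat.add_sub_cancel]
    rcases Nat.lt_or_ge j m with hjm | hjm
    · -- 1 ≤ j+1 ≤ m : Pascal case
      rw [if_pos (by omega : j + 1 ≤ m), qb_pascal hq (by omega), hg]
      simp only []
      rw [choose_two_succ, pow_add, mul_pow]
      ring
    · -- k = m + 1 : top boundary
      have : j = m := by omega
      subst this
      rw [if_neg (by omega), hg]
      simp only [qb_self hq]
      rw [choose_two_succ, pow_add, mul_pow]
      ring

end QBT

section Vanish
variable {K : Type*} [Field K] {q : K}

lemma qb_symm (m k : ℕ) (hk : k ≤ m) : qb q m (m - k) = qb q m k := by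
  rw [qb, qb, show m - (m - k) = k by omega, mul_comm]

lemma vanish_pow (hq : ∀ m : ℕ, (1 : K) - q ^ (m + 1) ≠ 0) (hq0 : q ≠ 0)
    {m d : ℕ} (hd : d < m) :
    ∑ k ∈ Finset.range (m + 1),
      (-1 : K) ^ (m - k) * q ^ ((m - k).choose 2) * qb q m k * (q ^ d) ^ k = 0 := by
  have hrefl := Finset.sum_range_reflect
    (fun k => (-1 : K) ^ (m - k) * q ^ ((m - k).choose 2) * qb q m k * (q ^ d) ^ k) (m + 1)
  rw [← hrefl]
  have hqd : (q : K) ^ d ≠ 0 := pow_ne_zero _ hq0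
  have step : ∀ k ∈ Finset.range (m + 1),
      (-1 : K) ^ (m - (m + 1 - 1 - k)) * q ^ ((m - (m + 1 - 1 - k)).choose 2) *
          qb q m (m + 1 - 1 - k) * (q ^ d) ^ (m + 1 - 1 - k)
        = q ^ (d * m) * ((-1 : K) ^ k * q ^ k.choose 2 * qb q m k * ((q ^ d)⁻¹) ^ k) := by
    intro k hk
    have hkm : k ≤ m := Nat.lt_succ_iff.mp (Finset.mem_range.mp hk)
    have e0 : m + 1 - 1 - k = m - k := by omega
    have e1 : m - (m - k) = k := by omega
    rw [e0, e1, qb_symm m k hkm]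
    have h1 : (q ^ d) ^ (m - k) = q ^ (d * m) * ((q ^ d)⁻¹) ^ k := by
      rw [inv_pow, pow_mul]
      field_simp
      rw [← pow_add]
      congr 1
      omega
    rw [h1]; ring
  rw [Finset.sum_congr rfl step, ← Finset.mul_sum, qbinom_sum hq m ((q ^ d)⁻¹)]
  have : qPoch ((q ^ d)⁻¹) q m = 0 := by
    apply Finset.prod_eq_zero (Finset.mem_range.mpr hd)
    rw [inv_mul_cancel₀ hqd, sub_self]
  rw [this, mul_zero]

end Vanish

section VanishPoly
variable {K : Type*} [Field K] {q : K}
open Polynomial in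
lemma vanish_poly (hq : ∀ m : ℕ, (1 : K) - q ^ (m + 1) ≠ 0) (hq0 : q ≠ 0)
    {m : ℕ} (hm : 1 ≤ m) (b : K) :
    ∑ k ∈ Finset.range (m + 1),
      (-1 : K) ^ (m - k) * q ^ ((m - k).choose 2) * qb q m k *
        ∏ i ∈ Finset.range (m - 1), (1 - b * q ^ (i + 1) * q ^ k) = 0 := by
  set P : K[X] := ∏ i ∈ Finset.range (m - 1), (1 - C (b * q ^ (i + 1)) * X) with hP
  have hdeg : P.natDegree < m := by
    have h1 : P.natDegree ≤ ∑ i ∈ Finset.range (m - 1),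
        ((1 : K[X]) - C (b * q ^ (i + 1)) * X).natDegree := natDegree_prod_le _ _
    have h2 : ∀ i, ((1 : K[X]) - C (b * q ^ (i + 1)) * X).natDegree ≤ 1 := by
      intro i
      refine le_trans (natDegree_sub_le _ _) ?_
      exact max_le (by simp) (le_trans (natDegree_C_mul_le _ _) natDegree_X_le)
    calc P.natDegree ≤ ∑ i ∈ Finset.range (m - 1), 1 :=
          le_trans h1 (Finset.sum_le_sum fun i _ => h2 i)
      _ = m - 1 := by simp
      _ < m := by omega
  have heval : ∀ k : ℕ, P.eval (q ^ k) = ∏ i ∈ Finset.range (m - 1), (1 - b * q ^ (i + 1) * q ^ k) := by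
    intro k
    rw [hP, eval_prod]
    exact Finset.prod_congr rfl fun i _ => by simp
  have hrw : ∀ k ∈ Finset.range (m + 1),
      (-1 : K) ^ (m - k) * q ^ ((m - k).choose 2) * qb q m k *
          ∏ i ∈ Finset.range (m - 1), (1 - b * q ^ (i + 1) * q ^ k)
        = ∑ d ∈ Finset.range m, P.coeff d *
            ((-1 : K) ^ (m - k) * q ^ ((m - k).choose 2) * qb q m k * (q ^ d) ^ k) := by
    intro k _
    rw [← heval k, eval_eq_sum_range' hdeg, Finset.mul_sum]
    apply Finset.sum_congr rfl
    intro d _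
    have : ((q : K) ^ k) ^ d = (q ^ d) ^ k := by
      rw [← pow_mul, mul_comm, pow_mul]
    rw [this]; ring
  rw [Finset.sum_congr rfl hrw, Finset.sum_comm]
  apply Finset.sum_eq_zero
  intro d hd
  rw [← Finset.mul_sum, vanish_pow hq hq0 (Finset.mem_range.mp hd), mul_zero]

end VanishPoly

noncomputable def bM {K : Type*} [Field K] (a q : K) (n r : ℕ) : K :=
  1 / (qPoch q q (n - r) * qPoch (a * q) q (n + r))

noncomputable def bMs {K : Type*} [Field K] (a q : K) (n r : ℕ) : K :=
  (1 - a * q ^ (2 * n)) / (1 - a) *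
    (qPoch a q (n + r) * (-1 : K) ^ (n - r) * q ^ Nat.choose (n - r) 2 / qPoch q q (n - r))

section Key
variable {K : Type*} [Field K] {a q : K}

lemma one_sub_a_ne (ha : ∀ m : ℕ, (1 : K) - a * q ^ m ≠ 0) : (1 : K) - a ≠ 0 := by
  have := ha 0; rwa [pow_zero, mul_one] at this

lemma qPoch_aq_eq (ha : ∀ m : ℕ, (1 : K) - a * q ^ m ≠ 0) (N : ℕ) :
    qPoch (a * q) q N = qPoch a q N * (1 - a * q ^ N) / (1 - a) := by
  have h := qPoch_succ' a q N
  rw [qPoch_succ] at h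
  rw [eq_div_iff (one_sub_a_ne ha)]
  linear_combination -h

lemma key_diag (hq : ∀ m : ℕ, (1 : K) - q ^ (m + 1) ≠ 0)
    (ha : ∀ m : ℕ, (1 : K) - a * q ^ m ≠ 0) (n : ℕ) :
    bMs a q n n * bM a q n n = 1 := by
  rw [bMs, bM]
  have hc : (0 : ℕ).choose 2 = 0 := rfl
  simp only [Nat.sub_self, qPoch_zero, pow_zero, hc, mul_one, one_mul, div_one]
  rw [qPoch_aq_eq ha (n + n)]
  have h1 : (1 : K) - a ≠ 0 := one_sub_a_ne ha
  have h2 : qPoch a q (n + n) ≠ 0 := qPoch_a_ne a q ha _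
  have h3 : (1 : K) - a * q ^ (n + n) ≠ 0 := ha _
  have h4 : (1 : K) - a * q ^ (2 * n) ≠ 0 := ha _
  rw [show 2 * n = n + n by omega]
  field_simp

end Key

section Key2
variable {K : Type*} [Field K] {a q : K}

lemma key_sum (hq : ∀ m : ℕ, (1 : K) - q ^ (m + 1) ≠ 0) (hq0 : q ≠ 0)
    (ha : ∀ m : ℕ, (1 : K) - a * q ^ m ≠ 0) (r m : ℕ) :
    ∑ k ∈ Finset.range (m + 1), bMs a q (r + m) (r + k) * bM a q (r + k) r
      = if m = 0 then 1 else 0 := by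
  rcases Nat.eq_zero_or_pos m with rfl | hm
  · simp only [Nat.add_zero, Finset.range_one, Finset.sum_singleton, if_true]
    simpa using key_diag hq ha r
  rw [if_neg (by omega)]
  have step : ∀ k ∈ Finset.range (m + 1),
      bMs a q (r + m) (r + k) * bM a q (r + k) r
        = (1 - a * q ^ (2 * (r + m))) / qPoch q q m *
            ((-1 : K) ^ (m - k) * q ^ ((m - k).choose 2) * qb q m k *
              ∏ i ∈ Finset.range (m - 1), (1 - (a * q ^ (2 * r)) * q ^ (i + 1) * q ^ k)) := by
    intro k hk
    have hkm : k ≤ m := Nat.lt_succ_iff.mp (Finset.mem_range.mp hk)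
    rw [bMs, bM, qb]
    have e1 : r + m - (r + k) = m - k := by omega
    have e2 : r + k - r = k := by omega
    have e3 : r + m + (r + k) = (2 * r + k + 1) + (m - 1) := by omega
    have e4 : r + k + r = 2 * r + k := by omega
    rw [e1, e2, e3, e4, qPoch_add, qPoch_succ']
    have eprod : ∏ i ∈ Finset.range (m - 1), (1 - a * q ^ (2 * r + k + 1 + i))
        = ∏ i ∈ Finset.range (m - 1), (1 - (a * q ^ (2 * r)) * q ^ (i + 1) * q ^ k) := by
      apply Finset.prod_congr rfl
      intro i _
      rw [show 2 * r + k + 1 + i = 2 * r + (i + 1) + k by omega, pow_add, pow_add]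
      ring
    rw [eprod]
    have h1 : (1 : K) - a ≠ 0 := one_sub_a_ne ha
    have h2 : qPoch q q (m - k) ≠ 0 := qPoch_qq_ne q hq _
    have h3 : qPoch q q k ≠ 0 := qPoch_qq_ne q hq _
    have h4 : qPoch q q m ≠ 0 := qPoch_qq_ne q hq _
    have h5 : qPoch (a * q) q (2 * r + k) ≠ 0 := qPoch_aq_ne a q ha _
    field_simp
    congr 1
    exact Finset.prod_congr rfl fun x _ => by ring
  rw [Finset.sum_congr rfl step, ← Finset.mul_sum,
    vanish_poly hq hq0 hm (a * q ^ (2 * r)), mul_zero]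

end Key2

section Assembly
variable {K : Type*} [Field K] {a q : K}

lemma key_Icc (hq : ∀ m : ℕ, (1 : K) - q ^ (m + 1) ≠ 0) (hq0 : q ≠ 0)
    (ha : ∀ m : ℕ, (1 : K) - a * q ^ m ≠ 0) {r n : ℕ} (hrn : r ≤ n) :
    ∑ j ∈ Finset.Icc r n, bMs a q n j * bM a q j r = if r = n then 1 else 0 := by
  have h := key_sum hq hq0 ha r (n - r)
  rw [show r + (n - r) = n by omega] at h
  rw [← Finset.Ico_add_one_right_eq_Icc, Finset.sum_Ico_eq_sum_range,
    show n + 1 - r = (n - r) + 1 by omega, h]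
  by_cases hc : r = n
  · rw [if_pos hc, if_pos (by omega)]
  · rw [if_neg hc, if_neg (by omega)]

lemma bailey_inv_apply (hq : ∀ m : ℕ, (1 : K) - q ^ (m + 1) ≠ 0) (hq0 : q ≠ 0)
    (ha : ∀ m : ℕ, (1 : K) - a * q ^ m ≠ 0) (α β : ℕ → K)
    (hβ : ∀ n, β n = ∑ r ∈ Finset.range (n + 1), bM a q n r * α r) (n : ℕ) :
    ∑ j ∈ Finset.range (n + 1), bMs a q n j * β j = α n := by
  have h1 : ∑ j ∈ Finset.range (n + 1), bMs a q n j * β j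
      = ∑ j ∈ Finset.range (n + 1), ∑ r ∈ Finset.range (j + 1),
          bMs a q n j * (bM a q j r * α r) := by
    exact Finset.sum_congr rfl fun j _ => by rw [hβ j, Finset.mul_sum]
  have h2 : ∑ j ∈ Finset.range (n + 1), ∑ r ∈ Finset.range (j + 1),
        bMs a q n j * (bM a q j r * α r)
      = ∑ r ∈ Finset.range (n + 1), ∑ j ∈ Finset.Icc r n,
          bMs a q n j * (bM a q j r * α r) := by
    apply Finset.sum_comm'
    intro j r
    simp only [Finset.mem_range, Finset.mem_Icc]
    omega
  rw [h1, h2]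
  have h3 : ∀ r ∈ Finset.range (n + 1),
      ∑ j ∈ Finset.Icc r n, bMs a q n j * (bM a q j r * α r)
        = if r = n then α r else 0 := by
    intro r hr
    have hrn : r ≤ n := Nat.lt_succ_iff.mp (Finset.mem_range.mp hr)
    have : ∑ j ∈ Finset.Icc r n, bMs a q n j * (bM a q j r * α r)
        = (∑ j ∈ Finset.Icc r n, bMs a q n j * bM a q j r) * α r := by
      rw [Finset.sum_mul]
      exact Finset.sum_congr rfl fun j _ => by ring
    rw [this, key_Icc hq hq0 ha hrn]
    split_ifs <;> simp
  rw [Finset.sum_congr rfl h3, Finset.sum_ite_eq' (Finset.range (n + 1)) n α,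
    if_pos (Finset.mem_range.mpr (by omega))]

lemma bMs_diag_ne (hq : ∀ m : ℕ, (1 : K) - q ^ (m + 1) ≠ 0)
    (ha : ∀ m : ℕ, (1 : K) - a * q ^ m ≠ 0) (n : ℕ) : bMs a q n n ≠ 0 := by
  rw [bMs]
  have hc : (0 : ℕ).choose 2 = 0 := rfl
  simp only [Nat.sub_self, qPoch_zero, pow_zero, hc, mul_one, one_mul, div_one]
  exact mul_ne_zero (div_ne_zero (ha _) (one_sub_a_ne ha)) (qPoch_a_ne a q ha _)

lemma beta_unique (hq : ∀ m : ℕ, (1 : K) - q ^ (m + 1) ≠ 0) (hq0 : q ≠ 0)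
    (ha : ∀ m : ℕ, (1 : K) - a * q ^ m ≠ 0) (α β : ℕ → K)
    (hα : ∀ n, α n = ∑ j ∈ Finset.range (n + 1), bMs a q n j * β j) (n : ℕ) :
    β n = ∑ r ∈ Finset.range (n + 1), bM a q n r * α r := by
  set β' : ℕ → K := fun n => ∑ r ∈ Finset.range (n + 1), bM a q n r * α r with hβ'
  have hforward : ∀ n, ∑ j ∈ Finset.range (n + 1), bMs a q n j * β' j = α n :=
    bailey_inv_apply hq hq0 ha α β' (fun _ => rfl)
  have hzero : ∀ n, ∑ j ∈ Finset.range (n + 1), bMs a q n j * (β j - β' j) = 0 := by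
    intro n
    have : ∑ j ∈ Finset.range (n + 1), bMs a q n j * (β j - β' j)
        = (∑ j ∈ Finset.range (n + 1), bMs a q n j * β j)
          - ∑ j ∈ Finset.range (n + 1), bMs a q n j * β' j := by
      rw [← Finset.sum_sub_distrib]
      exact Finset.sum_congr rfl fun j _ => by ring
    rw [this, hforward n, ← hα n, sub_self]
  induction n using Nat.strong_induction_on with
  | _ n ih =>
    have h := hzero n
    rw [Finset.sum_range_succ] at h
    have hz : ∑ j ∈ Finset.range n, bMs a q n j * (β j - β' j) = 0 :=
      Finset.sum_eq_zero fun j hj => by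
        rw [ih j (Finset.mem_range.mp hj), sub_self, mul_zero]
    rw [hz, zero_add] at h
    have := (mul_eq_zero.mp h).resolve_left (bMs_diag_ne hq ha n)
    have := sub_eq_zero.mp this
    exact this

end Assembly

def IsBaileyPair' {K : Type*} [Field K] (a q : K) (α β : ℕ → K) : Prop :=
  ∀ n : ℕ, β n =
    ∑ r ∈ Finset.range (n + 1), α r / (qPoch q q (n - r) * qPoch (a * q) q (n + r))

theorem main_gen {K : Type*} [Field K] {a q : K}
    (hq : ∀ m : ℕ, (1 : K) - q ^ (m + 1) ≠ 0) (hq0 : q ≠ 0)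
    (ha : ∀ m : ℕ, (1 : K) - a * q ^ m ≠ 0) (α β : ℕ → K) :
    IsBaileyPair' a q α β ↔
      ∀ n : ℕ,
        α n = (1 - a * q ^ (2 * n)) / (1 - a) *
          ∑ r ∈ Finset.range (n + 1),
            qPoch a q (n + r) * (-1 : K) ^ (n - r) *
              q ^ Nat.choose (n - r) 2 / qPoch q q (n - r) * β r := by
  have bridge1 : ∀ n : ℕ,
      (∑ r ∈ Finset.range (n + 1), α r / (qPoch q q (n - r) * qPoch (a * q) q (n + r)))
        = ∑ r ∈ Finset.range (n + 1), bM a q n r * α r :=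
    fun n => Finset.sum_congr rfl fun r _ => by rw [bM]; ring
  have bridge2 : ∀ n : ℕ,
      ((1 - a * q ^ (2 * n)) / (1 - a) *
          ∑ r ∈ Finset.range (n + 1),
            qPoch a q (n + r) * (-1 : K) ^ (n - r) *
              q ^ Nat.choose (n - r) 2 / qPoch q q (n - r) * β r)
        = ∑ r ∈ Finset.range (n + 1), bMs a q n r * β r := by
    intro n
    rw [Finset.mul_sum]
    exact Finset.sum_congr rfl fun r _ => by rw [bMs]; ring
  constructor
  · intro h n
    rw [bridge2 n]
    exact (bailey_inv_apply hq hq0 ha α β (fun n => (h n).trans (bridge1 n)) n).symm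
  · intro h n
    exact (beta_unique hq hq0 ha α β (fun n => (h n).trans (bridge2 n)) n).trans
      (bridge1 n).symm

lemma hmap_ne : ∀ p : MvPolynomial (Fin 2) ℚ, p ≠ 0 →
    algebraMap (MvPolynomial (Fin 2) ℚ) RatFuncAQ p ≠ 0 := by
  intro p hp h
  exact hp (IsFractionRing.injective (MvPolynomial (Fin 2) ℚ) RatFuncAQ (by rw [h, map_zero]))

lemma hq0_var : qVar ≠ 0 := hmap_ne _ (MvPolynomial.X_ne_zero 1)

lemma hq_var : ∀ m : ℕ, (1 : RatFuncAQ) - qVar ^ (m + 1) ≠ 0 := by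
  intro m
  have e : (1 : RatFuncAQ) - qVar ^ (m + 1)
      = algebraMap (MvPolynomial (Fin 2) ℚ) RatFuncAQ (1 - MvPolynomial.X 1 ^ (m + 1)) := by
    simp [qVar]
  rw [e]
  apply hmap_ne
  intro h0
  have h1 := congrArg (MvPolynomial.eval (fun _ => (0 : ℚ))) h0
  simp at h1

lemma ha_var : ∀ m : ℕ, (1 : RatFuncAQ) - aVar * qVar ^ m ≠ 0 := by
  intro m
  have e : (1 : RatFuncAQ) - aVar * qVar ^ m
      = algebraMap (MvPolynomial (Fin 2) ℚ) RatFuncAQ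
          (1 - MvPolynomial.X 0 * MvPolynomial.X 1 ^ m) := by
    simp [aVar, qVar]
  rw [e]
  apply hmap_ne
  intro h0
  have h1 := congrArg (MvPolynomial.eval (fun _ => (0 : ℚ))) h0
  simp at h1


/-- Sequences `α, β` in `ℚ(a,q)` form a Bailey pair relative to `a` if and only if
`α_n = ((1 - a q^{2n})/(1-a)) ∑_{r=0}^n ((a;q)_{n+r} (-1)^{n-r} q^{binom(n-r,2)}/(q;q)_{n-r}) β_r`. -/
theorem bailey_pair_iff_inversion (α β : ℕ → RatFuncAQ) :
    IsBaileyPair aVar qVar α β ↔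
      ∀ n : ℕ,
        α n = (1 - aVar * qVar ^ (2 * n)) / (1 - aVar) *
          ∑ r ∈ Finset.range (n + 1),
            qPoch aVar qVar (n + r) * (-1 : RatFuncAQ) ^ (n - r) *
              qVar ^ Nat.choose (n - r) 2 / qPoch qVar qVar (n - r) * β r :=
  main_gen hq_var hq0_var ha_var α β
end

section
/- (Bailey lattice step.) Let α = (α_n)_{n≥0} and β = (β_n)_{n≥0}, elements of ℚ(a,q), form a Bailey pair relative to a. Define α'_0 = α_0, α'_n = (1−a) a^n q^{n²−n} ( α_n/(1 − a q^{2n}) − a q^{2n−2} α_{n−1}/(1 − a q^{2n−2}) ) for n > 0, and β'_n = Σ_{r=0}^{n} (a^r q^{r²−r}/(q)_{n−r}) β_r. Then α' and β' form a Bailey pair relative to a q^{−1}. -/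
namespace BaileyAux
variable {K : Type*} [Field K]

lemma qPoch_succ (a q : K) (n : ℕ) :
    qPoch a q (n + 1) = qPoch a q n * (1 - a * q ^ n) := by
  simp [qPoch, Finset.prod_range_succ]

lemma qPoch_succ' (a q : K) (n : ℕ) :
    qPoch a q (n + 1) = (1 - a) * qPoch (a * q) q n := by
  rw [qPoch, Finset.prod_range_succ', mul_comm, qPoch]
  congr 1
  · simp
  · exact Finset.prod_congr rfl fun i _ => by ring

lemma qPoch_add (a q : K) (m n : ℕ) :
    qPoch a q (m + n) = qPoch a q m * qPoch (a * q ^ m) q n := by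
  rw [qPoch, Finset.prod_range_add, qPoch, qPoch]
  congr 1
  exact Finset.prod_congr rfl fun i _ => by rw [pow_add]; ring

lemma qPoch_ne_zero {b q : K} (hb : ∀ k : ℕ, b * q ^ k ≠ 1) (n : ℕ) :
    qPoch b q n ≠ 0 := by
  rw [qPoch]
  exact Finset.prod_ne_zero_iff.mpr fun i _ =>
    sub_ne_zero_of_ne fun hh => hb i hh.symm

lemma qq_ne_one {q : K} (hq : ∀ k : ℕ, q ^ (k + 1) ≠ 1) (k : ℕ) : q * q ^ k ≠ 1 := by
  intro hh; exact hq k (by rw [pow_succ, mul_comm]; exact hh)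

lemma qPochq_ne_zero {q : K} (hq : ∀ k : ℕ, q ^ (k + 1) ≠ 1) (n : ℕ) :
    qPoch q q n ≠ 0 := qPoch_ne_zero (qq_ne_one hq) n

lemma sq_exp (i : ℕ) : (i + 1) ^ 2 - (i + 1) = (i ^ 2 - i) + 2 * i := by
  have h2 : i ≤ i ^ 2 := Nat.le_self_pow two_ne_zero i
  have h3 : i + 1 ≤ (i + 1) ^ 2 := Nat.le_self_pow two_ne_zero (i + 1)
  zify [h2, h3]
  ring

lemma G_eq {q : K} (hq : ∀ k : ℕ, q ^ (k + 1) ≠ 1) :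
    ∀ (m : ℕ) (b : K), (∀ k : ℕ, b * q ^ k ≠ 1) →
      ∑ j ∈ Finset.range (m + 1),
        b ^ j * q ^ (j ^ 2 - j) / (qPoch q q (m - j) * qPoch q q j * qPoch b q j)
      = 1 / (qPoch q q m * qPoch b q m) := by
  intro m
  induction m with
  | zero => intro b hb; simp [qPoch]
  | succ m ih =>
    intro b hb
    have hP : ∀ k, qPoch q q k ≠ 0 := qPochq_ne_zero hq
    have hB : ∀ k, qPoch b q k ≠ 0 := qPoch_ne_zero hb
    have hq1 : (1 : K) - q ^ (m + 1) ≠ 0 := sub_ne_zero_of_ne fun hh => hq m hh.symm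
    have h1b : (1 : K) - b ≠ 0 :=
      sub_ne_zero_of_ne fun hh => hb 0 (by simpa using hh.symm)
    have hbq : ∀ k : ℕ, (b * q) * q ^ k ≠ 1 := by
      intro k hh
      exact hb (k + 1) (by rw [pow_succ]; rw [← hh]; ring)
    have key : ∀ j ∈ Finset.range (m + 2),
        b ^ j * q ^ (j ^ 2 - j) / (qPoch q q (m + 1 - j) * qPoch q q j * qPoch b q j)
        = (1 - q ^ (m + 1))⁻¹ *
          ((1 - q ^ (m + 1 - j)) * (b ^ j * q ^ (j ^ 2 - j)) /
              (qPoch q q (m + 1 - j) * qPoch q q j * qPoch b q j)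
           + q ^ (m + 1 - j) * (1 - q ^ j) * (b ^ j * q ^ (j ^ 2 - j)) /
              (qPoch q q (m + 1 - j) * qPoch q q j * qPoch b q j)) := by
      intro j hj
      have hj' : j ≤ m + 1 := by simpa [Nat.lt_succ_iff] using hj
      have hc : (1 - q ^ (m + 1 - j)) + q ^ (m + 1 - j) * (1 - q ^ j) = 1 - q ^ (m + 1) := by
        rw [show (q : K) ^ (m + 1) = q ^ (m + 1 - j) * q ^ j by rw [← pow_add]; congr 1; omega]
        ring
      rw [← add_div, ← add_mul, hc]
      conv_rhs => rw [mul_div_assoc, inv_mul_cancel_left₀ hq1]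
    rw [Finset.sum_congr rfl key, ← Finset.mul_sum, Finset.sum_add_distrib]
    -- first sum
    have S1 : ∑ j ∈ Finset.range (m + 2),
        (1 - q ^ (m + 1 - j)) * (b ^ j * q ^ (j ^ 2 - j)) /
          (qPoch q q (m + 1 - j) * qPoch q q j * qPoch b q j)
        = 1 / (qPoch q q m * qPoch b q m) := by
      rw [Finset.sum_range_succ]
      simp only [Nat.sub_self, pow_zero, sub_self, zero_mul, zero_div, add_zero]
      rw [← ih b hb]
      apply Finset.sum_congr rfl
      intro j hj
      have hj' : j ≤ m := by simpa [Nat.lt_succ_iff] using hj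
      have hcne : (1 : K) - q ^ (m + 1 - j) ≠ 0 := by
        have : m + 1 - j = (m - j) + 1 := by omega
        rw [this]
        exact sub_ne_zero_of_ne fun hh => hq (m - j) hh.symm
      have hsp : qPoch q q (m + 1 - j) = qPoch q q (m - j) * (1 - q ^ (m + 1 - j)) := by
        rw [show m + 1 - j = (m - j) + 1 by omega, qPoch_succ, pow_succ]
        ring
      rw [hsp,
        show qPoch q q (m - j) * (1 - q ^ (m + 1 - j)) * qPoch q q j * qPoch b q j
          = qPoch q q (m - j) * qPoch q q j * qPoch b q j * (1 - q ^ (m + 1 - j)) by ring,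
        show (1 - q ^ (m + 1 - j)) * (b ^ j * q ^ (j ^ 2 - j))
          = b ^ j * q ^ (j ^ 2 - j) * (1 - q ^ (m + 1 - j)) by ring,
        mul_div_mul_right _ _ hcne]
    -- second sum
    have S2 : ∑ j ∈ Finset.range (m + 2),
        q ^ (m + 1 - j) * (1 - q ^ j) * (b ^ j * q ^ (j ^ 2 - j)) /
          (qPoch q q (m + 1 - j) * qPoch q q j * qPoch b q j)
        = b * q ^ m / (1 - b) * (1 / (qPoch q q m * qPoch (b * q) q m)) := by
      rw [Finset.sum_range_succ']
      simp only [pow_zero, sub_self, mul_zero, zero_mul, mul_one, zero_div, add_zero]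
      rw [← ih (b * q) hbq, Finset.mul_sum]
      apply Finset.sum_congr rfl
      intro i hi
      have hi' : i ≤ m := by simpa [Nat.lt_succ_iff] using hi
      have em : m + 1 - (i + 1) = m - i := by omega
      rw [em, sq_exp i, qPoch_succ q q i, qPoch_succ' b q i, pow_succ q i,
        show (q : K) ^ (i ^ 2 - i + 2 * i) = q ^ (i ^ 2 - i) * (q ^ i * q ^ i) by
          rw [← pow_add, ← pow_add]; congr 1; omega,
        show (q : K) ^ m = q ^ (m - i) * q ^ i by rw [← pow_add]; congr 1; omega,
        mul_pow]
      have h1 : qPoch q q (m - i) ≠ 0 := hP _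
      have h2 : qPoch q q i ≠ 0 := hP _
      have h3 : qPoch (b * q) q i ≠ 0 := qPoch_ne_zero hbq i
      have h4 : (1 : K) - q * q ^ i ≠ 0 :=
        sub_ne_zero_of_ne fun hh => qq_ne_one hq i hh.symm
      have h34 : qPoch (b * q) q i * (1 - q * q ^ i) ≠ 0 := mul_ne_zero h3 h4
      field_simp [h1, h2, h3, h4, h1b, h34]
      have h3' : qPoch (q * b) q i ≠ 0 := by rwa [mul_comm q b]
      have h4' : (1 : K) - q ^ i * q ≠ 0 := by rwa [mul_comm (q ^ i) q]
      rw [div_eq_div_iff (mul_ne_zero h4' h3') h3']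
      ring
    rw [S1, S2]
    have hbqm : (1 : K) - b * q ^ m ≠ 0 := sub_ne_zero_of_ne fun hh => hb m hh.symm
    have hBq : qPoch (b * q) q m = qPoch b q m * (1 - b * q ^ m) / (1 - b) := by
      rw [eq_div_iff h1b, mul_comm _ (1 - b), ← qPoch_succ' b q m, qPoch_succ]
    have hPm := hP m
    have hBm := hB m
    have h5 : (1 : K) - q * q ^ m ≠ 0 :=
      sub_ne_zero_of_ne fun hh => qq_ne_one hq m hh.symm
    have e2 : b * q ^ m / (1 - b) * (1 / (qPoch q q m * qPoch (b * q) q m))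
        = b * q ^ m / (qPoch q q m * qPoch b q m * (1 - b * q ^ m)) := by
      rw [hBq,
        show qPoch q q m * (qPoch b q m * (1 - b * q ^ m) / (1 - b))
          = qPoch q q m * qPoch b q m * (1 - b * q ^ m) / (1 - b) by ring,
        one_div_div, div_mul_div_comm, mul_comm (b * q ^ m) (1 - b),
        mul_div_mul_left _ _ h1b]
    rw [e2, qPoch_succ q q m, qPoch_succ b q m,
      show (q : K) ^ (m + 1) = q * q ^ m from by rw [pow_succ]; ring]
    have hbqm' : (1 : K) - q ^ m * b ≠ 0 := by rwa [mul_comm]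
    field_simp
    ring


lemma F_eq {a q : K} (hq : ∀ k : ℕ, q ^ (k + 1) ≠ 1) (ha : ∀ k : ℕ, a * q ^ k ≠ 1)
    (n s : ℕ) (hs : s ≤ n) :
    ∑ r ∈ Finset.Ico s (n + 1),
      a ^ r * q ^ (r ^ 2 - r) / (qPoch q q (n - r) * qPoch q q (r - s) * qPoch a q (r + s))
    = a ^ s * q ^ (s ^ 2 - s) / (qPoch q q (n - s) * qPoch a q (n + s)) := by
  have hb : ∀ k : ℕ, (a * q ^ (2 * s)) * q ^ k ≠ 1 := by
    intro k hh
    exact ha (2 * s + k) (by rw [pow_add, ← hh]; ring)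
  rw [Finset.sum_Ico_eq_sum_range, show n + 1 - s = (n - s) + 1 by omega]
  have key : ∀ j ∈ Finset.range ((n - s) + 1),
      a ^ (s + j) * q ^ ((s + j) ^ 2 - (s + j)) /
        (qPoch q q (n - (s + j)) * qPoch q q ((s + j) - s) * qPoch a q ((s + j) + s))
      = (a ^ s * q ^ (s ^ 2 - s) / qPoch a q (2 * s)) *
          ((a * q ^ (2 * s)) ^ j * q ^ (j ^ 2 - j) /
            (qPoch q q ((n - s) - j) * qPoch q q j * qPoch (a * q ^ (2 * s)) q j)) := by
    intro j hj
    have hj' : j ≤ n - s := by simpa [Nat.lt_succ_iff] using hj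
    have e4 : (s + j) ^ 2 - (s + j) = (s ^ 2 - s) + ((j ^ 2 - j) + 2 * s * j) := by
      have h2 : s ≤ s ^ 2 := Nat.le_self_pow two_ne_zero s
      have h3 : j ≤ j ^ 2 := Nat.le_self_pow two_ne_zero j
      have h4 : s + j ≤ (s + j) ^ 2 := Nat.le_self_pow two_ne_zero (s + j)
      zify [h2, h3, h4]; ring
    rw [show n - (s + j) = (n - s) - j by omega, show (s + j) - s = j by omega,
      show (s + j) + s = 2 * s + j by omega, e4, qPoch_add a q (2 * s) j,
      pow_add a s j, pow_add, pow_add, mul_pow,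
      show (q : K) ^ (2 * s * j) = (q ^ (2 * s)) ^ j by rw [← pow_mul]]
    have hA : qPoch a q (2 * s) ≠ 0 := qPoch_ne_zero ha _
    have hQ : qPoch (a * q ^ (2 * s)) q (2 * s) ≠ 0 := qPoch_ne_zero hb _
    have h1 : qPoch q q ((n - s) - j) ≠ 0 := qPochq_ne_zero hq _
    have h2 : qPoch q q j ≠ 0 := qPochq_ne_zero hq _
    have h3 : qPoch (a * q ^ (2 * s)) q j ≠ 0 := qPoch_ne_zero hb _
    field_simp
  rw [Finset.sum_congr rfl key, ← Finset.mul_sum, G_eq hq (n - s) _ hb,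
    show n + s = 2 * s + (n - s) by omega, qPoch_add a q (2 * s) (n - s)]
  rw [div_mul_div_comm, mul_one,
    show qPoch a q (2 * s) * (qPoch q q (n - s) * qPoch (a * q ^ (2 * s)) q (n - s))
      = qPoch q q (n - s) * (qPoch a q (2 * s) * qPoch (a * q ^ (2 * s)) q (n - s)) by ring]

lemma pf_aux (N P1 P2 A u v x : K) (hP1 : P1 ≠ 0) (hP2 : P2 ≠ 0)
    (hA : A ≠ 0) (hu : 1 - x * u ≠ 0) (huv : 1 - x * (u * v) ≠ 0) :
    N / (P1 * P2 * (A * (1 - x * (u * v)) / (1 - x)))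
      = (1 - x) / (1 - x * u) *
        (N / (P1 * P2 * A) - x * u * ((1 - v) * N / (P1 * P2 * (A * (1 - x * (u * v)))))) := by
  have hD1 : P1 * P2 * A ≠ 0 := by simp [hP1, hP2, hA]
  have hD2 : P1 * P2 * (A * (1 - x * (u * v))) ≠ 0 := by simp [hP1, hP2, hA, huv]
  rw [show P1 * P2 * (A * (1 - x * (u * v)) / (1 - x))
      = (P1 * P2 * (A * (1 - x * (u * v)))) / (1 - x) by ring,
    div_div_eq_mul_div,
    show N / (P1 * P2 * A)
      = N * (1 - x * (u * v)) / (P1 * P2 * (A * (1 - x * (u * v)))) by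
        rw [div_eq_div_iff hD1 hD2]; ring,
    mul_div_assoc', div_sub_div_same, div_mul_div_comm,
    div_eq_div_iff hD2 (by simp [hu, hD2] : (1 - x * u) * (P1 * P2 * (A * (1 - x * (u * v)))) ≠ 0)]
  ring

lemma inner_eq {a q : K} (hq : ∀ k : ℕ, q ^ (k + 1) ≠ 1) (ha : ∀ k : ℕ, a * q ^ k ≠ 1)
    (n s : ℕ) (hs : s ≤ n) :
    ∑ r ∈ Finset.Ico s (n + 1),
      a ^ r * q ^ (r ^ 2 - r) / (qPoch q q (n - r) * qPoch q q (r - s) * qPoch (a * q) q (r + s))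
    = (1 - a) / (1 - a * q ^ (2 * s)) *
        (a ^ s * q ^ (s ^ 2 - s) / (qPoch q q (n - s) * qPoch a q (n + s))
         - a * q ^ (2 * s) *
            (if s + 1 ≤ n then
              a ^ (s + 1) * q ^ ((s + 1) ^ 2 - (s + 1)) /
                (qPoch q q (n - (s + 1)) * qPoch a q (n + (s + 1)))
             else 0)) := by
  have h1a : (1 : K) - a ≠ 0 := sub_ne_zero_of_ne fun hh => ha 0 (by simpa using hh.symm)
  have termwise : ∀ r ∈ Finset.Ico s (n + 1),
      a ^ r * q ^ (r ^ 2 - r) / (qPoch q q (n - r) * qPoch q q (r - s) * qPoch (a * q) q (r + s))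
      = (1 - a) / (1 - a * q ^ (2 * s)) *
          (a ^ r * q ^ (r ^ 2 - r) / (qPoch q q (n - r) * qPoch q q (r - s) * qPoch a q (r + s))
           - a * q ^ (2 * s) *
              ((1 - q ^ (r - s)) * (a ^ r * q ^ (r ^ 2 - r)) /
                (qPoch q q (n - r) * qPoch q q (r - s) * qPoch a q (r + s + 1)))) := by
    intro r hr
    have hsr : s ≤ r := (Finset.mem_Ico.mp hr).1
    have hAQ : qPoch (a * q) q (r + s) = qPoch a q (r + s) * (1 - a * q ^ (r + s)) / (1 - a) := by
      rw [eq_div_iff h1a, mul_comm _ (1 - a), ← qPoch_succ' a q (r + s), qPoch_succ]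
    have hA1 : qPoch a q (r + s + 1) = qPoch a q (r + s) * (1 - a * q ^ (r + s)) :=
      qPoch_succ a q (r + s)
    rw [hAQ, hA1, show (q : K) ^ (r + s) = q ^ (2 * s) * q ^ (r - s) by
      rw [← pow_add]; congr 1; omega]
    have hP1 : qPoch q q (n - r) ≠ 0 := qPochq_ne_zero hq _
    have hP2 : qPoch q q (r - s) ≠ 0 := qPochq_ne_zero hq _
    have hA : qPoch a q (r + s) ≠ 0 := qPoch_ne_zero ha _
    have hu : (1 : K) - a * q ^ (2 * s) ≠ 0 := sub_ne_zero_of_ne fun hh => ha (2 * s) hh.symm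
    have huv : (1 : K) - a * (q ^ (2 * s) * q ^ (r - s)) ≠ 0 := by
      rw [← mul_assoc]
      exact sub_ne_zero_of_ne fun hh =>
        ha (2 * s + (r - s)) (by rw [pow_add, ← mul_assoc]; exact hh.symm)
    exact pf_aux _ _ _ _ _ _ _ hP1 hP2 hA hu huv
  rw [Finset.sum_congr rfl termwise, ← Finset.mul_sum, Finset.sum_sub_distrib,
    ← Finset.mul_sum, F_eq hq ha n s hs]
  congr 2
  rw [Finset.sum_eq_sum_Ico_succ_bot (show s < n + 1 by omega)]
  simp only [Nat.sub_self, pow_zero, sub_self, zero_mul, zero_div, zero_add]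
  have termwise2 : ∀ r ∈ Finset.Ico (s + 1) (n + 1),
      (1 - q ^ (r - s)) * (a ^ r * q ^ (r ^ 2 - r)) /
        (qPoch q q (n - r) * qPoch q q (r - s) * qPoch a q (r + s + 1))
      = a ^ r * q ^ (r ^ 2 - r) /
          (qPoch q q (n - r) * qPoch q q (r - (s + 1)) * qPoch a q (r + (s + 1))) := by
    intro r hr
    have hsr : s + 1 ≤ r := (Finset.mem_Ico.mp hr).1
    have hc : (1 : K) - q ^ (r - s) ≠ 0 := by
      have : r - s = (r - s - 1) + 1 := by omega
      rw [this]
      exact sub_ne_zero_of_ne fun hh => hq (r - s - 1) hh.symm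
    have hsp : qPoch q q (r - s) = qPoch q q (r - (s + 1)) * (1 - q ^ (r - s)) := by
      rw [show r - s = (r - (s + 1)) + 1 by omega, qPoch_succ, pow_succ]
      ring
    rw [show r + s + 1 = r + (s + 1) by omega, hsp,
      show qPoch q q (n - r) * (qPoch q q (r - (s + 1)) * (1 - q ^ (r - s))) * qPoch a q (r + (s + 1))
        = qPoch q q (n - r) * qPoch q q (r - (s + 1)) * qPoch a q (r + (s + 1)) * (1 - q ^ (r - s)) by
          ring,
      show (1 - q ^ (r - s)) * (a ^ r * q ^ (r ^ 2 - r))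
        = a ^ r * q ^ (r ^ 2 - r) * (1 - q ^ (r - s)) by ring,
      mul_div_mul_right _ _ hc]
  rw [Finset.sum_congr rfl termwise2]
  by_cases hsn : s + 1 ≤ n
  · rw [if_pos hsn, F_eq hq ha n (s + 1) hsn]
  · rw [if_neg hsn, show s + 1 = n + 1 by omega, Finset.Ico_self, Finset.sum_empty]


theorem main_gen (a q : K) (hq0 : q ≠ 0) (hq : ∀ k : ℕ, q ^ (k + 1) ≠ 1)
    (ha : ∀ k : ℕ, a * q ^ k ≠ 1) (α β α' : ℕ → K) (h : IsBaileyPair a q α β)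
    (hα'0 : α' 0 = α 0)
    (hα's : ∀ m : ℕ, α' (m + 1) = (1 - a) * a ^ (m + 1) * q ^ ((m + 1) ^ 2 - (m + 1)) *
        (α (m + 1) / (1 - a * q ^ (2 * (m + 1))) -
          a * q ^ (2 * (m + 1) - 2) * α m / (1 - a * q ^ (2 * (m + 1) - 2)))) :
    IsBaileyPair (a * q⁻¹) q α' (fun n => ∑ r ∈ Finset.range (n + 1),
      a ^ r * q ^ (r ^ 2 - r) / qPoch q q (n - r) * β r) := by
  intro n
  have h1a : (1 : K) - a ≠ 0 := sub_ne_zero_of_ne fun hh => ha 0 (by simpa using hh.symm)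
  simp only []
  rw [show a * q⁻¹ * q = a by rw [mul_assoc, inv_mul_cancel₀ hq0, mul_one]]
  have e1 : ∀ r ∈ Finset.range (n + 1),
      a ^ r * q ^ (r ^ 2 - r) / qPoch q q (n - r) * β r
      = ∑ s ∈ Finset.range (r + 1), α s *
          (a ^ r * q ^ (r ^ 2 - r) /
            (qPoch q q (n - r) * qPoch q q (r - s) * qPoch (a * q) q (r + s))) := by
    intro r _
    rw [h r, Finset.mul_sum]
    exact Finset.sum_congr rfl fun s _ => by ring
  rw [Finset.sum_congr rfl e1,
    Finset.sum_comm' (s := Finset.range (n + 1)) (t := fun r => Finset.range (r + 1))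
      (t' := Finset.range (n + 1)) (s' := fun s => Finset.Ico s (n + 1))
      (by intro x y; simp only [Finset.mem_range, Finset.mem_Ico]; omega)]
  have e2 : ∀ s ∈ Finset.range (n + 1),
      (∑ r ∈ Finset.Ico s (n + 1), α s *
        (a ^ r * q ^ (r ^ 2 - r) /
          (qPoch q q (n - r) * qPoch q q (r - s) * qPoch (a * q) q (r + s))))
      = α s * ((1 - a) / (1 - a * q ^ (2 * s)) *
          (a ^ s * q ^ (s ^ 2 - s) / (qPoch q q (n - s) * qPoch a q (n + s))))
        - (if s + 1 ≤ n then
            α s * ((1 - a) / (1 - a * q ^ (2 * s)) * (a * q ^ (2 * s) *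
              (a ^ (s + 1) * q ^ ((s + 1) ^ 2 - (s + 1)) /
                (qPoch q q (n - (s + 1)) * qPoch a q (n + (s + 1))))))
           else 0) := by
    intro s hs
    have hsn : s ≤ n := by simpa [Nat.lt_succ_iff] using hs
    rw [← Finset.mul_sum, inner_eq hq ha n s hsn]
    by_cases hc : s + 1 ≤ n
    · rw [if_pos hc, if_pos hc]; ring
    · rw [if_neg hc, if_neg hc]; ring
  rw [Finset.sum_congr rfl e2, Finset.sum_sub_distrib]
  rw [Finset.sum_range_succ'
    (fun r => α' r / (qPoch q q (n - r) * qPoch a q (n + r))) n]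
  have e3 : ∀ i ∈ Finset.range n,
      α' (i + 1) / (qPoch q q (n - (i + 1)) * qPoch a q (n + (i + 1)))
      = α (i + 1) * ((1 - a) / (1 - a * q ^ (2 * (i + 1))) *
          (a ^ (i + 1) * q ^ ((i + 1) ^ 2 - (i + 1)) /
            (qPoch q q (n - (i + 1)) * qPoch a q (n + (i + 1)))))
        - α i * ((1 - a) / (1 - a * q ^ (2 * i)) * (a * q ^ (2 * i) *
            (a ^ (i + 1) * q ^ ((i + 1) ^ 2 - (i + 1)) /
              (qPoch q q (n - (i + 1)) * qPoch a q (n + (i + 1)))))) := by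
    intro i _
    rw [hα's i, show 2 * (i + 1) - 2 = 2 * i by omega]
    ring
  rw [Finset.sum_congr rfl e3, Finset.sum_sub_distrib]
  have e4 : α' 0 / (qPoch q q (n - 0) * qPoch a q (n + 0))
      = α 0 * ((1 - a) / (1 - a * q ^ (2 * 0)) *
          (a ^ 0 * q ^ (0 ^ 2 - 0) / (qPoch q q (n - 0) * qPoch a q (n + 0)))) := by
    rw [hα'0]
    norm_num [div_self h1a]
    ring
  rw [e4]
  have e5 : ∑ s ∈ Finset.range (n + 1),
      (if s + 1 ≤ n then
        α s * ((1 - a) / (1 - a * q ^ (2 * s)) * (a * q ^ (2 * s) *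
          (a ^ (s + 1) * q ^ ((s + 1) ^ 2 - (s + 1)) /
            (qPoch q q (n - (s + 1)) * qPoch a q (n + (s + 1))))))
       else 0)
      = ∑ s ∈ Finset.range n,
        α s * ((1 - a) / (1 - a * q ^ (2 * s)) * (a * q ^ (2 * s) *
          (a ^ (s + 1) * q ^ ((s + 1) ^ 2 - (s + 1)) /
            (qPoch q q (n - (s + 1)) * qPoch a q (n + (s + 1)))))) := by
    rw [Finset.sum_range_succ, if_neg (by omega : ¬ (n + 1 ≤ n)), add_zero]
    exact Finset.sum_congr rfl fun s hs =>
      if_pos (Nat.succ_le_of_lt (Finset.mem_range.mp hs))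
  rw [e5, Finset.sum_range_succ'
    (fun s => α s * ((1 - a) / (1 - a * q ^ (2 * s)) *
      (a ^ s * q ^ (s ^ 2 - s) / (qPoch q q (n - s) * qPoch a q (n + s))))) n]
  ring


end BaileyAux

/-- The Bailey lattice step: if `(α, β)` is a Bailey pair relative to `a` in `ℚ(a,q)`, then
`α'_0 = α_0`,
`α'_n = (1-a) a^n q^{n²-n} ( α_n/(1 - a q^{2n}) - a q^{2n-2} α_{n-1}/(1 - a q^{2n-2}) )` for
`n > 0`, and `β'_n = ∑_{r=0}^n (a^r q^{r²-r}/(q;q)_{n-r}) β_r` form a Bailey pair relative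
to `a q⁻¹`. -/
theorem bailey_lattice_step (α β : ℕ → RatFuncAQ) (h : IsBaileyPair aVar qVar α β) :
    IsBaileyPair (aVar * qVar⁻¹) qVar
      (fun n =>
        match n with
        | 0 => α 0
        | m + 1 =>
          (1 - aVar) * aVar ^ (m + 1) * qVar ^ ((m + 1) ^ 2 - (m + 1)) *
            (α (m + 1) / (1 - aVar * qVar ^ (2 * (m + 1))) -
              aVar * qVar ^ (2 * (m + 1) - 2) * α m / (1 - aVar * qVar ^ (2 * (m + 1) - 2))))
      (fun n => ∑ r ∈ Finset.range (n + 1),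
        aVar ^ r * qVar ^ (r ^ 2 - r) / qPoch qVar qVar (n - r) * β r) := by
  classical
  have hinj : Function.Injective (algebraMap (MvPolynomial (Fin 2) ℚ) RatFuncAQ) :=
    IsFractionRing.injective _ _
  have hq0 : qVar ≠ 0 := by
    have := (map_ne_zero_iff (algebraMap (MvPolynomial (Fin 2) ℚ) RatFuncAQ) hinj).mpr
      (MvPolynomial.X_ne_zero (R := ℚ) (1 : Fin 2))
    exact this
  have hq : ∀ k : ℕ, qVar ^ (k + 1) ≠ 1 := by
    intro k hh
    have h1 : (algebraMap (MvPolynomial (Fin 2) ℚ) RatFuncAQ)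
        ((MvPolynomial.X 1 : MvPolynomial (Fin 2) ℚ) ^ (k + 1))
        = algebraMap (MvPolynomial (Fin 2) ℚ) RatFuncAQ 1 := by
      rw [map_pow, map_one]; exact hh
    have h2 := hinj h1
    apply_fun MvPolynomial.eval (fun _ => (0 : ℚ)) at h2
    simp at h2
  have ha : ∀ k : ℕ, aVar * qVar ^ k ≠ 1 := by
    intro k hh
    have h1 : (algebraMap (MvPolynomial (Fin 2) ℚ) RatFuncAQ)
        ((MvPolynomial.X 0 * MvPolynomial.X 1 ^ k : MvPolynomial (Fin 2) ℚ))
        = algebraMap (MvPolynomial (Fin 2) ℚ) RatFuncAQ 1 := by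
      rw [map_mul, map_pow, map_one]; exact hh
    have h2 := hinj h1
    apply_fun MvPolynomial.eval (fun _ => (0 : ℚ)) at h2
    simp at h2
  exact BaileyAux.main_gen aVar qVar hq0 hq ha α β _ h rfl (fun m => rfl)
end
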